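/- arXiv:1304.4097 — 4 statements merged into one kernel-verified Lean document; each statement's English description precedes it below -/
import Mathlib

section
/- Assume in addition that A is abelian, i.e. ⁅a, b⁆ = 0 for all a, b ∈ A. Then for every m ∈ M, every i ≥ 1, and all a₁,…,a_i ∈ A, Φ(m)_i(a₁,…,a_i) = P([⋯[m, a₁], a₂, …, a_i]) (the iterated bracket with m innermost), and for every K-linear derivation D of M with D(L) ⊆ L, Φ(D)_i(a₁,…,a_i) = P([⋯[D a₁, a₂], …, a_i]). (Ungraded instance of Proposition 5.3 of the paper: when A is abelian the higher derived brackets reduce to Voronov's higher derived brackets.) -/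
/-!
Since `A` is abelian, `[⋯[x, a₁], …, a_r]` vanishes for `x ∈ A` and `r ≥ 1`, so in `Φ(m)_i` and
`Φ(D)_i` only the term `k = i` survives, with coefficient `B₀/i! = 1/i!`. For pairwise commuting
`a_j` the Jacobi identity makes `[⋯[m, a₁], …, a_i]` symmetric in the `a_j`, and so is
`[⋯[D a₁, a₂], …, a_i]`, because `D⁅a, b⁆ = 0` gives `⁅D a, b⁆ = ⁅D b, a⁆`. The sum over `S_i`
therefore consists of `i!` equal terms.
-/

section HigherDerivedBrackets

variable {K : Type*} [Field K] [CharZero K]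
variable {M : Type*} [LieRing M] [LieAlgebra K M]

/-- Iterated Lie bracket `[⋯[x, y₁], …, y_r]`, bracketing from the left. -/
def nestBr {M : Type*} [LieRing M] (x : M) (l : List M) : M :=
  l.foldl (fun y z => ⁅y, z⁆) x

/-- `[⋯[D a₁, a₂], …, a_r]`: the iterated bracket with `D` applied to the head. -/
def dnestBr {M : Type*} [LieRing M] (D : M → M) : List M → M
  | [] => 0
  | x :: xs => nestBr (D x) xs

/-- The list `(a_{σ(1)}, …, a_{σ(i)})` obtained by permuting the entries of `l`. -/
def permList {M : Type*} (l : List M) (σ : Equiv.Perm (Fin l.length)) : List M :=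
  List.ofFn (fun j => l.get (σ j))

/-- The Bernoulli coefficient `B_{i-k}/(k!(i-k)!)`, viewed in `K`. -/
noncomputable def coefB (K : Type*) [Field K] [CharZero K] (i k : ℕ) : K :=
  ((bernoulli (i - k) / ((Nat.factorial k : ℚ) * (Nat.factorial (i - k) : ℚ)) : ℚ) : K)

/-- The higher derived brackets `Φ(m)_i : A^i → A` associated to an element `m ∈ M`:
`Φ(m)_i(a₁,…,a_i) = Σ_{σ ∈ S_i} Σ_{k=0}^{i} (B_{i−k}/(k!(i−k)!))
  [⋯[P([⋯[m, a_{σ(1)}], …, a_{σ(k)}]), a_{σ(k+1)}], …, a_{σ(i)}]`,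
with `Φ(m)_0 = P m` (the value on the empty list). -/
noncomputable def PhiElt (P : M →ₗ[K] M) (m : M) (l : List M) : M :=
  ∑ σ : Equiv.Perm (Fin l.length), ∑ k ∈ Finset.range (l.length + 1),
    coefB K l.length k •
      nestBr (P (nestBr m ((permList l σ).take k))) ((permList l σ).drop k)

/-- The higher derived brackets `Φ(D)_i : A^i → A` associated to a derivation `D`:
`Φ(D)_i(a₁,…,a_i) = Σ_{σ ∈ S_i} Σ_{k=1}^{i} (B_{i−k}/(k!(i−k)!))
  [⋯[P([⋯[D a_{σ(1)}, a_{σ(2)}], …, a_{σ(k)}]), a_{σ(k+1)}], …, a_{σ(i)}]`,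
with `Φ(D)_0 = 0` (the value on the empty list). -/
noncomputable def PhiDer (P : M →ₗ[K] M) (D : M → M) (l : List M) : M :=
  ∑ σ : Equiv.Perm (Fin l.length), ∑ k ∈ Finset.Icc 1 l.length,
    coefB K l.length k •
      nestBr (P (dnestBr D ((permList l σ).take k))) ((permList l σ).drop k)

/-- The Nijenhuis–Richardson bracket of two families `q, r : List M → M` of
symmetric multilinear maps: its `i`-th component is
`[q,r]_i(a₁,…,a_i) = Σ_{k=0}^{i} (1/(k!(i−k)!)) Σ_{σ ∈ S_i}
  ( q_{i−k+1}(r_k(a_{σ(1)},…,a_{σ(k)}), a_{σ(k+1)},…,a_{σ(i)})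
  − r_{i−k+1}(q_k(a_{σ(1)},…,a_{σ(k)}), a_{σ(k+1)},…,a_{σ(i)}) )`. -/
noncomputable def nrBracket (K : Type*) [Field K] [CharZero K] {M : Type*}
    [LieRing M] [LieAlgebra K M] (q r : List M → M) (l : List M) : M :=
  ∑ k ∈ Finset.range (l.length + 1),
    ((1 / ((Nat.factorial k : ℚ) * (Nat.factorial (l.length - k) : ℚ)) : ℚ) : K) •
      ∑ σ : Equiv.Perm (Fin l.length),
        (q (r ((permList l σ).take k) :: (permList l σ).drop k)
          - r (q ((permList l σ).take k) :: (permList l σ).drop k))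

open scoped Nat

theorem lie_lie_right_comm {x a b : M} (h : ⁅a, b⁆ = 0) : ⁅⁅x, a⁆, b⁆ = ⁅⁅x, b⁆, a⁆ := by
  rw [lie_lie, h, lie_zero, zero_sub, lie_skew]

theorem lie_map_comm_of_derivation {D : M → M} (hD : ∀ x y : M, D ⁅x, y⁆ = ⁅D x, y⁆ + ⁅x, D y⁆)
    {a b : M} (h : ⁅a, b⁆ = 0) : ⁅D a, b⁆ = ⁅D b, a⁆ := by
  have hD0 : D 0 = 0 := by simpa using hD 0 0
  have h' := hD a b
  rw [h, hD0, ← lie_skew a (D b)] at h'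
  exact add_neg_eq_zero.mp h'.symm

theorem nestBr_cons (x a : M) (l : List M) : nestBr x (a :: l) = nestBr ⁅x, a⁆ l := rfl

theorem nestBr_zero (l : List M) : nestBr (0 : M) l = 0 := by
  induction l with
  | nil => rfl
  | cons a t ih => rw [nestBr_cons, zero_lie, ih]

theorem nestBr_cons_eq_zero {x a : M} (h : ⁅x, a⁆ = 0) (l : List M) : nestBr x (a :: l) = 0 := by
  rw [nestBr_cons, h, nestBr_zero]

theorem List.Perm.nestBr_eq {l₁ l₂ : List M} (p : l₁.Perm l₂)
    (hl : ∀ a ∈ l₁, ∀ b ∈ l₁, ⁅a, b⁆ = 0) (x : M) : nestBr x l₁ = nestBr x l₂ :=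
  p.foldl_eq' (fun a ha b hb _ => lie_lie_right_comm (hl a ha b hb)) x

theorem List.Perm.dnestBr_eq {D : M → M} (hD : ∀ x y : M, D ⁅x, y⁆ = ⁅D x, y⁆ + ⁅x, D y⁆)
    {l₁ l₂ : List M} (p : l₁.Perm l₂) (hl : ∀ a ∈ l₁, ∀ b ∈ l₁, ⁅a, b⁆ = 0) :
    dnestBr D l₁ = dnestBr D l₂ := by
  induction p with
  | nil => rfl
  | cons x p _ =>
    exact p.nestBr_eq (fun a ha b hb => hl a (.tail _ ha) b (.tail _ hb)) (D x)
  | swap x y t =>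
    show nestBr ⁅D y, x⁆ t = nestBr ⁅D x, y⁆ t
    rw [lie_map_comm_of_derivation hD (hl y (by simp) x (by simp))]
  | trans p₁₂ _ ih₁₂ ih₂₃ =>
    exact (ih₁₂ hl).trans (ih₂₃ fun a ha b hb => hl a (p₁₂.mem_iff.mpr ha) b (p₁₂.mem_iff.mpr hb))

theorem permList_perm {α : Type*} (l : List α) (σ : Equiv.Perm (Fin l.length)) :
    (permList l σ).Perm l := by
  have h := σ.ofFn_comp_perm l.get
  rwa [List.ofFn_get] at h

theorem length_permList {α : Type*} (l : List α) (σ : Equiv.Perm (Fin l.length)) :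
    (permList l σ).length = l.length :=
  List.length_ofFn

theorem coefB_self (n : ℕ) : coefB K n n = (n ! : K)⁻¹ := by
  simp [coefB]

theorem sum_perm_inv_factorial_smul {V : Type*} [AddCommGroup V] [Module K V] (n : ℕ) (x : V) :
    ∑ _σ : Equiv.Perm (Fin n), (n ! : K)⁻¹ • x = x := by
  rw [Finset.sum_const, Finset.card_univ, Fintype.card_perm, Fintype.card_fin,
    ← Nat.cast_smul_eq_nsmul K, smul_smul,
    mul_inv_cancel₀ (Nat.cast_ne_zero.mpr n.factorial_ne_zero), one_smul]

theorem sum_coefB_smul_nestBr_eq (P : M →ₗ[K] M)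
    (hA : ∀ x y : M, x ∈ LinearMap.range P → y ∈ LinearMap.range P → ⁅x, y⁆ = (0 : M))
    (F : List M → M) {l : List M} (hl : ∀ x ∈ l, x ∈ LinearMap.range P) {n : ℕ}
    (hn : l.length = n) {s : Finset ℕ} (hs : n ∈ s) (hs' : ∀ k ∈ s, k ≤ n) :
    ∑ k ∈ s, coefB K n k • nestBr (P (F (l.take k))) (l.drop k) = (n ! : K)⁻¹ • P (F l) := by
  subst hn
  rw [Finset.sum_eq_single_of_mem _ hs, coefB_self, List.take_length, List.drop_length]
  · rfl
  intro k hk hkn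
  have hk : k < l.length := lt_of_le_of_ne (hs' k hk) hkn
  rw [List.drop_eq_getElem_cons hk,
    nestBr_cons_eq_zero (hA _ _ ⟨_, rfl⟩ (hl _ (l.getElem_mem hk))), smul_zero]

theorem sum_perm_sum_coefB_smul_nestBr_eq (P : M →ₗ[K] M)
    (hA : ∀ x y : M, x ∈ LinearMap.range P → y ∈ LinearMap.range P → ⁅x, y⁆ = (0 : M))
    (F : List M → M) {l : List M} (hF : ∀ l' : List M, l'.Perm l → F l' = F l)
    (hl : ∀ x ∈ l, x ∈ LinearMap.range P) {s : Finset ℕ} (hs : l.length ∈ s)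
    (hs' : ∀ k ∈ s, k ≤ l.length) :
    ∑ σ : Equiv.Perm (Fin l.length), ∑ k ∈ s, coefB K l.length k •
      nestBr (P (F ((permList l σ).take k))) ((permList l σ).drop k) = P (F l) := by
  calc _ = ∑ _σ : Equiv.Perm (Fin l.length), (l.length ! : K)⁻¹ • P (F l) := by
        refine Finset.sum_congr rfl fun σ _ => ?_
        rw [sum_coefB_smul_nestBr_eq P hA F (fun x hx => hl x ((permList_perm l σ).subset hx))
          (length_permList l σ) hs hs', hF _ (permList_perm l σ)]
    _ = P (F l) := sum_perm_inv_factorial_smul _ _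

theorem statement3_general (P : M →ₗ[K] M)
    (hAab : ∀ x y : M, x ∈ LinearMap.range P → y ∈ LinearMap.range P →
      ⁅x, y⁆ = (0 : M))
    (m : M) (D : M → M)
    (hDder : ∀ x y : M, D ⁅x, y⁆ = ⁅D x, y⁆ + ⁅x, D y⁆)
    (l : List M) (hl : ∀ x ∈ l, x ∈ LinearMap.range P) :
    PhiElt P m l = P (nestBr m l) ∧ PhiDer P D l = P (dnestBr D l) := by
  have hcomm : ∀ a ∈ l, ∀ b ∈ l, ⁅a, b⁆ = 0 := fun a ha b hb => hAab a b (hl a ha) (hl b hb)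
  constructor
  · exact sum_perm_sum_coefB_smul_nestBr_eq P hAab (nestBr m)
      (fun _ p => (p.symm.nestBr_eq hcomm m).symm) hl (Finset.self_mem_range_succ _)
      (fun k hk => Nat.lt_succ_iff.mp (Finset.mem_range.mp hk))
  · cases l with
    | nil => simp [PhiDer, dnestBr]
    | cons a t =>
      exact sum_perm_sum_coefB_smul_nestBr_eq P hAab (dnestBr D)
        (fun _ p => (p.symm.dnestBr_eq hDder hcomm).symm) hl
        (Finset.mem_Icc.mpr ⟨by simp, le_rfl⟩) (fun k hk => (Finset.mem_Icc.mp hk).2)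

/-- Ungraded instance of Proposition 5.3: when `A` is abelian
the higher derived brackets reduce to Voronov's higher derived brackets. -/
theorem statement3 (P : M →ₗ[K] M) (hP : ∀ x : M, P (P x) = P x)
    (hL : ∀ x y : M, P x = 0 → P y = 0 → P ⁅x, y⁆ = 0)
    (hAab : ∀ x y : M, x ∈ LinearMap.range P → y ∈ LinearMap.range P →
      ⁅x, y⁆ = (0 : M))
    (m : M) (D : M → M) (hDlin : IsLinearMap K D)
    (hDder : ∀ x y : M, D ⁅x, y⁆ = ⁅D x, y⁆ + ⁅x, D y⁆)
    (hDL : ∀ x : M, P x = 0 → P (D x) = 0)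
    (l : List M) (hne : l ≠ []) (hl : ∀ x ∈ l, x ∈ LinearMap.range P) :
    PhiElt P m l = P (nestBr m l) ∧ PhiDer P D l = P (dnestBr D l) :=
  statement3_general P hAab m D hDder l hl

end HigherDerivedBrackets
end

section
/- Let d ∈ End_R(V) be arbitrary and let f ∈ End_R(V) satisfy P ∘ f ∘ (id − P) = f. Then ⁅d, f⁆ − P ∘ ⁅d, f⁆ ∘ (id − P) = ⁅(id − P) ∘ d ∘ P, f⁆. (Ungraded instance of the final identity in the paper's example on subcomplex deformations, exhibiting the strict morphism f ↦ [P⊥dP, f].) -/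
/-!
Ungraded instance of the final identity in the example on subcomplex
deformations (Section 6 of Bandiera, "Nonabelian higher derived brackets"):
for `f` with `P∘f∘(id−P) = f` and arbitrary `d`,
`⁅d, f⁆ − P∘⁅d, f⁆∘(id−P) = ⁅(id−P)∘d∘P, f⁆`, where `⁅f, g⁆ = f∘g − g∘f`.
-/

theorem statement10 {R V : Type*} [CommRing R] [AddCommGroup V] [Module R V]
    (P : V →ₗ[R] V) (hP : P ∘ₗ P = P) (d f : V →ₗ[R] V)
    (hf : P ∘ₗ f ∘ₗ ((LinearMap.id : V →ₗ[R] V) - P) = f) :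
    (d ∘ₗ f - f ∘ₗ d)
        - P ∘ₗ (d ∘ₗ f - f ∘ₗ d) ∘ₗ ((LinearMap.id : V →ₗ[R] V) - P)
      = (((LinearMap.id : V →ₗ[R] V) - P) ∘ₗ d ∘ₗ P) ∘ₗ f
          - f ∘ₗ (((LinearMap.id : V →ₗ[R] V) - P) ∘ₗ d ∘ₗ P) := by
  have hmul : ∀ a b : V →ₗ[R] V, a ∘ₗ b = a * b := fun _ _ => rfl
  have hone : (LinearMap.id : V →ₗ[R] V) = 1 := rfl
  simp only [hmul, hone] at hP hf ⊢
  rw [← hf]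
  have h2 : ∀ x : V →ₗ[R] V, P * (P * x) = P * x := fun x => by
    rw [← mul_assoc, hP]
  simp only [mul_sub, sub_mul, mul_one, one_mul, mul_assoc, hP, h2]
  abel
end

section
/- For every f ∈ End_K(A) with f(1) = 0 and all a, b ∈ A: (1/2)( P(⁅⁅f, l_a⁆, l_b⁆) + P(⁅⁅f, l_b⁆, l_a⁆) ) − (1/2)( ⁅P(⁅f, l_a⁆), l_b⁆ + ⁅P(⁅f, l_b⁆), l_a⁆ ) = l_{f(a∘b) − f(a)∘b − a∘f(b)} as endomorphisms of A. Equivalently, the second higher derived bracket of such an f is Φ(f)₂(a, b) = f(a∘b) − f(a)∘b − a∘f(b). (Ungraded instance of the second computation in Example 6.4 of the paper.) -/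
/-!
Ungraded instance of the second computation in Example 6.4 of Bandiera,
"Nonabelian higher derived brackets": with `P(f) = l_{f(1)}`, for `f` with
`f(1) = 0` the second higher derived bracket is
`Φ(f)₂(a, b) = f(a∘b) − f(a)∘b − a∘f(b)`, where `a∘b = (1/2)(ab + ba)` is the
Jordan product and `⁅f, g⁆ = f∘g − g∘f`.
-/

section Example64

variable (K A : Type*) [Field K] [CharZero K] [Ring A] [Algebra K A]

/-- Left multiplication `l_a`. -/
noncomputable def lmul (a : A) : A →ₗ[K] A := LinearMap.mulLeft K a

/-- The commutator bracket `⁅f, g⁆ = f∘g − g∘f` on `End_K(A)`. -/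
def cbr (f g : A →ₗ[K] A) : A →ₗ[K] A := f ∘ₗ g - g ∘ₗ f

/-- The projection `P(f) = l_{f(1)}`. -/
noncomputable def PE (f : A →ₗ[K] A) : A →ₗ[K] A := LinearMap.mulLeft K (f 1)

/-- The Jordan product `a∘b = (1/2)(ab + ba)`. -/
noncomputable def jrd (a b : A) : A := (1 / 2 : K) • (a * b + b * a)

/-- For `f ∈ End_K(A)` with `f(1) = 0` and all `a, b ∈ A`:
`(1/2)(P(⁅⁅f,l_a⁆,l_b⁆) + P(⁅⁅f,l_b⁆,l_a⁆))
 − (1/2)(⁅P(⁅f,l_a⁆),l_b⁆ + ⁅P(⁅f,l_b⁆),l_a⁆) = l_{f(a∘b) − f(a)∘b − a∘f(b)}`. -/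
theorem statement14 (f : A →ₗ[K] A) (hf : f 1 = 0) (a b : A) :
    (1 / 2 : K) • (PE K A (cbr K A (cbr K A f (lmul K A a)) (lmul K A b))
        + PE K A (cbr K A (cbr K A f (lmul K A b)) (lmul K A a)))
      - (1 / 2 : K) • (cbr K A (PE K A (cbr K A f (lmul K A a))) (lmul K A b)
        + cbr K A (PE K A (cbr K A f (lmul K A b))) (lmul K A a))
      = lmul K A (f (jrd K A a b) - jrd K A (f a) b - jrd K A a (f b)) := by
  ext x
  simp only [lmul, cbr, PE, jrd, hf, LinearMap.sub_apply, LinearMap.add_apply,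
    LinearMap.smul_apply, LinearMap.comp_apply, LinearMap.mulLeft_apply, map_add, map_smul,
    map_sub, mul_add, add_mul, sub_mul, mul_sub, smul_add, smul_sub, mul_smul_comm,
    smul_mul_assoc, mul_zero, sub_zero, mul_one]
  noncomm_ring

end Example64
end

section
/- For f ∈ End_K(A) and k ∈ ℕ, the following are equivalent: (i) for every n > k and all a₁, …, a_n ∈ A, ⁅⋯⁅f, l_{a₁}⁆, …, l_{a_n}⁆(1) = 0; (ii) for all a₀, a₁, …, a_k ∈ A, ⁅⋯⁅f, l_{a₀}⁆, l_{a₁}⁆, …, l_{a_k}⁆ = 0 as an endomorphism of A, i.e. f is a differential operator on A of order ≤ k in the Grothendieck sense. (Claim of Remark 6.5 of the paper for commutative A: since the multiplication operators form an abelian Lie subalgebra, by Proposition 5.3 condition (i) expresses the vanishing of all higher derived brackets Φ(f)_n with n > k.) -/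
/-!
Remark 6.5 of Bandiera, "Nonabelian higher derived brackets", for commutative
`A`: the vanishing of all higher derived brackets `Φ(f)_n` with `n > k`
(condition (i), expressed via iterated commutators with multiplication
operators evaluated at `1`) is equivalent to `f` being a differential operator
of order `≤ k` in the Grothendieck sense (condition (ii)).
-/

lemma foldl_zero_aux {K A : Type*} [Field K] [CommRing A] [Algebra K A]
    (m : List A) :
    m.foldl (fun g a =>
      g ∘ₗ LinearMap.mulLeft K a - LinearMap.mulLeft K a ∘ₗ g)
      (0 : A →ₗ[K] A) = 0 := by
  induction m with
  | nil => rfl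
  | cons a m ih =>
    simpa using ih

/-- For `f ∈ End_K(A)`, `A` commutative and unital, and
`k ∈ ℕ`, the following are equivalent:
(i) `⁅⋯⁅f, l_{a₁}⁆, …, l_{a_n}⁆(1) = 0` for every `n > k` and all `a₁,…,a_n ∈ A`;
(ii) `⁅⋯⁅f, l_{a₀}⁆, l_{a₁}⁆, …, l_{a_k}⁆ = 0` for all `a₀, a₁, …, a_k ∈ A`. -/
theorem statement16 {K A : Type*} [Field K] [CharZero K] [CommRing A]
    [Algebra K A] (f : A →ₗ[K] A) (k : ℕ) :
    (∀ l : List A, k < l.length →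
      (l.foldl (fun g a =>
        g ∘ₗ LinearMap.mulLeft K a - LinearMap.mulLeft K a ∘ₗ g) f) 1 = 0) ↔
    (∀ l : List A, l.length = k + 1 →
      l.foldl (fun g a =>
        g ∘ₗ LinearMap.mulLeft K a - LinearMap.mulLeft K a ∘ₗ g) f = 0) := by
  constructor
  · intro h l hl
    ext x
    have h1 : (List.foldl (fun g a =>
        g ∘ₗ LinearMap.mulLeft K a - LinearMap.mulLeft K a ∘ₗ g) f (l ++ [x])) 1 = 0 :=
      h _ (by simp [hl])
    have h2 : (List.foldl (fun g a =>
        g ∘ₗ LinearMap.mulLeft K a - LinearMap.mulLeft K a ∘ₗ g) f l) 1 = 0 :=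
      h l (by omega)
    rw [List.foldl_append] at h1
    simp only [List.foldl_cons, List.foldl_nil, LinearMap.sub_apply,
      LinearMap.comp_apply, LinearMap.mulLeft_apply, mul_one, h2, mul_zero,
      sub_zero] at h1
    simpa using h1
  · intro h l hl
    have : l = l.take (k + 1) ++ l.drop (k + 1) := (List.take_append_drop _ _).symm
    rw [this, List.foldl_append, h _ (by simp; omega), foldl_zero_aux]
    rfl
end
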